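/- Suppose c₀, …, c_{g−1} ∈ k satisfy the polynomial identity φ_g(X + a)·X^{g+1} = φ_g(X)·(X + a)^{g+1} − 2·(X + a)^{g+1}·X^{g+1}·(Σ_{i=0}^{g−1} cᵢ·Xⁱ) in k[X]. Then c_{g−1} = −(g·a)/2, which (since p divides 2g+1) equals a/4; in particular c_{g−1} ≠ 0. (This is the coefficient comparison showing that no k[G]-linear splitting of the Hodge–de Rham sequence can exist.) -/

import Mathlib

open Polynomial

/-- The truncation of a polynomial in degrees `≤ m`. -/
noncomputable def truncLE {k : Type} [Field k] (m : ℕ) (u : k[X]) : k[X] :=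
  ∑ j ∈ Finset.range (m + 1), C (u.coeff j) * X ^ j

/-- `s_g(X) := X·f′(X) − 2g·f(X)`. -/
noncomputable def sPoly {k : Type} [Field k] (f : k[X]) (g : ℕ) : k[X] :=
  X * derivative f - C ((2 * g : ℕ) : k) * f

/-- `φ_g(X)`, the sum of the terms of `s_g` of degree `> g`. -/
noncomputable def phiPoly {k : Type} [Field k] (f : k[X]) (g : ℕ) : k[X] :=
  sPoly f g - truncLE g (sPoly f g)

/-! Compare the coefficients of `X ^ (3g+1)`. Since `(2g+1) - 2g = 1`, `φ_g` is monic of degree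
`2g+1`, so `φ_g(X + a)·X^{g+1}` and `φ_g(X)·(X + a)^{g+1}` are both monic of degree `3g+2`.
Subleading coefficients add under products of monic polynomials, and the substitution `X ↦ X + a`
adds `deg · a`, so the two subleading coefficients differ by `(2g+1)a - (g+1)a = ga`. The last term
contributes `2c_{g-1}`, whence `2c_{g-1} = -ga`; and `2g = -1` in `k`. -/

namespace Polynomial

section CommRing

variable {R : Type*} [CommRing R]

theorem coeff_sum_range_C_mul_X_pow (c : ℕ → R) (m n : ℕ) :
    (∑ i ∈ Finset.range m, C (c i) * X ^ i).coeff n = if n < m then c n else 0 := by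
  simp only [finsetSum_coeff, coeff_C_mul_X_pow, Finset.sum_ite_eq, Finset.mem_range]

theorem natDegree_sum_range_C_mul_X_pow_le (c : ℕ → R) (m : ℕ) :
    (∑ i ∈ Finset.range m, C (c i) * X ^ i).natDegree ≤ m - 1 :=
  natDegree_le_iff_coeff_eq_zero.mpr fun n hn => by
    rw [coeff_sum_range_C_mul_X_pow, if_neg (by omega)]

theorem nextCoeff_X_pow (n : ℕ) : (X ^ n : R[X]).nextCoeff = 0 := by
  nontriviality R
  rcases n with _ | n <;> simp [nextCoeff]

theorem coeff_sub_eq_nextCoeff_sub {P Q : R[X]} {n : ℕ} (hP : P.natDegree = n + 1)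
    (hQ : Q.natDegree = n + 1) : (P - Q).coeff n = P.nextCoeff - Q.nextCoeff := by
  rw [coeff_sub, nextCoeff_of_natDegree_pos (by omega), nextCoeff_of_natDegree_pos (by omega),
    hP, hQ, Nat.add_sub_cancel]

theorem Monic.nextCoeff_taylor {P : R[X]} (hP : P.Monic) (a : R) :
    (taylor a P).nextCoeff = P.nextCoeff + P.natDegree * a := by
  rcases hn : P.natDegree with _ | n
  · rw [hP.natDegree_eq_zero.mp hn]
    simp
  have hdeg : (hasseDeriv n P).natDegree < 2 := by
    have := natDegree_hasseDeriv_le P n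
    omega
  rw [nextCoeff_of_natDegree_pos (by simp [hn]), nextCoeff_of_natDegree_pos (by omega),
    natDegree_taylor, hn, Nat.add_sub_cancel, taylor_coeff, eval_eq_sum_range' hdeg]
  simp only [Finset.sum_range_succ, Finset.sum_range_zero, hasseDeriv_coeff, zero_add,
    Nat.choose_self, add_comm 1 n, Nat.choose_succ_self_right]
  rw [← hn, hP.coeff_natDegree]
  push_cast
  ring

end CommRing

end Polynomial

theorem two_mul_coeff_eq_of_comp_X_add_C_mul_X_pow_eq {R : Type*} [CommRing R] {φ : R[X]}
    {g : ℕ} (hg : 0 < g) (hφ : φ.Monic) (hdeg : φ.natDegree = 2 * g + 1) (a : R) (c : ℕ → R)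
    (h : φ.comp (X + C a) * X ^ (g + 1) =
        φ * (X + C a) ^ (g + 1) -
          2 * (X + C a) ^ (g + 1) * X ^ (g + 1) * (∑ i ∈ Finset.range g, C (c i) * X ^ i)) :
    2 * c (g - 1) = -((g : R) * a) := by
  nontriviality R
  set S := ∑ i ∈ Finset.range g, C (c i) * X ^ i
  have hshift : (taylor a φ).Monic := by rw [Monic, leadingCoeff_taylor, hφ.leadingCoeff]
  have hpow : ((X + C a) ^ (g + 1)).Monic := (monic_X_add_C a).pow _
  have hleft : (φ * (X + C a) ^ (g + 1)).natDegree = 3 * g + 1 + 1 := by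
    rw [hφ.natDegree_mul hpow, hdeg, natDegree_pow_X_add_C]; ring
  have hright : (taylor a φ * X ^ (g + 1)).natDegree = 3 * g + 1 + 1 := by
    rw [hshift.natDegree_mul (monic_X_pow _), natDegree_taylor, hdeg, natDegree_X_pow]; ring
  have hprod : ((X + C a) ^ (g + 1) * X ^ (g + 1)).Monic := hpow.mul (monic_X_pow _)
  have hS : (2 * ((X + C a) ^ (g + 1) * X ^ (g + 1) * S)).coeff (3 * g + 1) = 2 * c (g - 1) := by
    have hdeg' : ((X + C a) ^ (g + 1) * X ^ (g + 1)).natDegree = 2 * g + 2 := by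
      rw [hpow.natDegree_mul (monic_X_pow _), natDegree_pow_X_add_C, natDegree_X_pow]; ring
    rw [coeff_ofNat_mul, show 3 * g + 1 = (2 * g + 2) + (g - 1) by omega,
      coeff_mul_add_eq_of_natDegree_le hdeg'.le (natDegree_sum_range_C_mul_X_pow_le c g),
      ← hdeg', hprod.coeff_natDegree, coeff_sum_range_C_mul_X_pow, if_pos (by omega), one_mul]
  have key : φ * (X + C a) ^ (g + 1) - taylor a φ * X ^ (g + 1) =
      2 * ((X + C a) ^ (g + 1) * X ^ (g + 1) * S) := by
    rw [taylor_apply, h]; ring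
  have := congrArg (coeff · (3 * g + 1)) key
  simp only [hS, coeff_sub_eq_nextCoeff_sub hleft hright, hφ.nextCoeff_mul hpow,
    hshift.nextCoeff_mul (monic_X_pow _), nextCoeff_X_pow, hφ.nextCoeff_taylor,
    (monic_X_add_C a).nextCoeff_pow, nextCoeff_X_add_C, hdeg] at this
  rw [← this]
  push_cast
  ring

section phiPoly

variable {k : Type} [Field k] (f : k[X]) (g : ℕ)

theorem coeff_X_mul_derivative (n : ℕ) : (X * derivative f).coeff n = n * f.coeff n := by
  rcases n with _ | n
  · simp
  · rw [coeff_X_mul, coeff_derivative, mul_comm]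
    push_cast
    rfl

theorem coeff_sPoly (n : ℕ) : (sPoly f g).coeff n = ((n : k) - 2 * g) * f.coeff n := by
  rw [sPoly, coeff_sub, coeff_X_mul_derivative, coeff_C_mul]
  push_cast
  ring

theorem coeff_phiPoly_of_lt {n : ℕ} (hn : g < n) : (phiPoly f g).coeff n = (sPoly f g).coeff n := by
  rw [phiPoly, coeff_sub, truncLE, coeff_sum_range_C_mul_X_pow, if_neg (by omega), sub_zero]

variable {f g}

theorem coeff_phiPoly_of_natDegree_eq (hf : f.Monic) (hdeg : f.natDegree = 2 * g + 1) :
    (phiPoly f g).coeff (2 * g + 1) = 1 := by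
  rw [coeff_phiPoly_of_lt f g (by omega), coeff_sPoly, ← hdeg, hf.coeff_natDegree, hdeg]
  push_cast
  ring

theorem natDegree_phiPoly (hf : f.Monic) (hdeg : f.natDegree = 2 * g + 1) :
    (phiPoly f g).natDegree = 2 * g + 1 := by
  refine natDegree_eq_of_le_of_coeff_ne_zero (natDegree_le_iff_coeff_eq_zero.mpr fun n hn => ?_)
    (by simp [coeff_phiPoly_of_natDegree_eq hf hdeg])
  rw [coeff_phiPoly_of_lt f g (by omega), coeff_sPoly,
    coeff_eq_zero_of_natDegree_lt (hdeg ▸ hn), mul_zero]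

theorem monic_phiPoly (hf : f.Monic) (hdeg : f.natDegree = 2 * g + 1) : (phiPoly f g).Monic := by
  rw [Monic, leadingCoeff, natDegree_phiPoly hf hdeg, coeff_phiPoly_of_natDegree_eq hf hdeg]

end phiPoly

theorem statement10_general {k : Type} [Field k] (p : ℕ) [CharP k p]
    (g : ℕ) (hg : 2 ≤ g) (hpg : p ∣ 2 * g + 1) (a : k) (ha : a ≠ 0)
    (f : k[X]) (hmonic : f.Monic) (hdeg : f.natDegree = 2 * g + 1)
    (c : ℕ → k)
    (hc : (phiPoly f g).comp (X + C a) * X ^ (g + 1) =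
        phiPoly f g * (X + C a) ^ (g + 1) -
          2 * (X + C a) ^ (g + 1) * X ^ (g + 1) *
            (∑ i ∈ Finset.range g, C (c i) * X ^ i)) :
    c (g - 1) = -((g : k) * a) / 2 ∧ c (g - 1) = a / 4 ∧ c (g - 1) ≠ 0 := by
  have hcoeff : 2 * c (g - 1) = -((g : k) * a) :=
    two_mul_coeff_eq_of_comp_X_add_C_mul_X_pow_eq (by omega) (monic_phiPoly hmonic hdeg)
      (natDegree_phiPoly hmonic hdeg) a c hc
  have hchar : 2 * (g : k) + 1 = 0 := by
    exact_mod_cast (CharP.cast_eq_zero_iff k p _).mpr hpg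
  have two_ne : (2 : k) ≠ 0 := fun h => one_ne_zero (by linear_combination hchar - (g : k) * h)
  have four_ne : (4 : k) ≠ 0 := by
    simpa only [show (4 : k) = 2 * 2 by norm_num] using mul_ne_zero two_ne two_ne
  have hquarter : c (g - 1) = a / 4 := by
    rw [eq_div_iff four_ne]
    linear_combination 2 * hcoeff - a * hchar
  exact ⟨by rw [eq_div_iff two_ne]; linear_combination hcoeff, hquarter,
    hquarter ▸ div_ne_zero ha four_ne⟩

/-- Let `k` be algebraically closed of characteristic `p ≥ 3`, `g ≥ 2` with
`p ∣ 2g+1`, `a ≠ 0`, and `f` monic of degree `2g+1`.  If `c₀, …, c_{g−1} ∈ k` satisfy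
`φ_g(X + a)·X^{g+1} = φ_g(X)·(X + a)^{g+1} − 2·(X + a)^{g+1}·X^{g+1}·(Σ_{i<g} cᵢXⁱ)` in `k[X]`,
then `c_{g−1} = −(g·a)/2 = a/4 ≠ 0`. -/
theorem statement10 {k : Type} [Field k] [IsAlgClosed k] (p : ℕ) [CharP k p] (hp : 3 ≤ p)
    (g : ℕ) (hg : 2 ≤ g) (hpg : p ∣ 2 * g + 1) (a : k) (ha : a ≠ 0)
    (f : k[X]) (hmonic : f.Monic) (hdeg : f.natDegree = 2 * g + 1)
    (c : ℕ → k)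
    (hc : (phiPoly f g).comp (X + C a) * X ^ (g + 1) =
        phiPoly f g * (X + C a) ^ (g + 1) -
          2 * (X + C a) ^ (g + 1) * X ^ (g + 1) *
            (∑ i ∈ Finset.range g, C (c i) * X ^ i)) :
    c (g - 1) = -((g : k) * a) / 2 ∧ c (g - 1) = a / 4 ∧ c (g - 1) ≠ 0 :=
  statement10_general p g hg hpg a ha f hmonic hdeg c hc
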